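/- Let ML be a normal modal logic containing the axiom schemes D: □A → ¬□¬A and 4: □A → □□A, extended by a fixed point constant δ and the axiom δ ↔ ¬□δ. Then the resulting system is inconsistent. -/

import Mathlib

/-- Modal formulas, with a distinguished propositional constant `δ`
(the fixed point constant). -/
inductive Fm : Type
  | atom : ℕ → Fm
  | delta : Fm
  | bot : Fm
  | imp : Fm → Fm → Fm
  | box : Fm → Fm

namespace Fm

def neg (A : Fm) : Fm := imp A bot
def conj (A B : Fm) : Fm := neg (imp A (neg B))
def iff' (A B : Fm) : Fm := conj (imp A B) (imp B A)

end Fm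

open Fm

/-!
From `δ → ¬□δ` we get `□δ → ¬δ`, so by necessitation and K `□□δ → □¬δ`; with 4 this gives
`□δ → □¬δ`, which together with D refutes `□δ`. So `¬□δ` is provable, hence so is `δ` by the
fixed point, and necessitation turns it into `□δ`.
-/

structure HilbertImp (Prov : Fm → Prop) : Prop where
  ax1 : ∀ A B, Prov (imp A (imp B A))
  ax2 : ∀ A B C, Prov (imp (imp A (imp B C)) (imp (imp A B) (imp A C)))
  mp : ∀ A B, Prov (imp A B) → Prov A → Prov B

structure HilbertClassical (Prov : Fm → Prop) : Prop extends HilbertImp Prov where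
  ax3 : ∀ A B, Prov (imp (imp (neg A) (neg B)) (imp B A))

structure NormalModal (Prov : Fm → Prop) : Prop extends HilbertClassical Prov where
  axK : ∀ A B, Prov (imp (box (imp A B)) (imp (box A) (box B)))
  nec : ∀ A, Prov A → Prov (box A)

variable {Prov : Fm → Prop} {A B C : Fm}

namespace HilbertImp

theorem imp_self (h : HilbertImp Prov) (A : Fm) : Prov (imp A A) :=
  h.mp _ _ (h.mp _ _ (h.ax2 A (imp A A) A) (h.ax1 A (imp A A))) (h.ax1 A A)

theorem imp_trans (h : HilbertImp Prov) (hAB : Prov (imp A B)) (hBC : Prov (imp B C)) :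
    Prov (imp A C) :=
  h.mp _ _ (h.mp _ _ (h.ax2 A B C) (h.mp _ _ (h.ax1 (imp B C) A) hBC)) hAB

theorem imp_of_imp_imp (h : HilbertImp Prov) (hABC : Prov (imp A (imp B C))) (hB : Prov B) :
    Prov (imp A C) :=
  h.mp _ _ (h.mp _ _ (h.ax2 A B C) hABC) (h.mp _ _ (h.ax1 B A) hB)

theorem imp_imp_imp_left (h : HilbertImp Prov) (C : Fm) (hAB : Prov (imp A B)) :
    Prov (imp (imp B C) (imp A C)) :=
  h.imp_of_imp_imp (h.imp_trans (h.ax1 (imp B C) A) (h.ax2 A B C)) hAB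

theorem imp_imp_imp_right (h : HilbertImp Prov) (A : Fm) (hBC : Prov (imp B C)) :
    Prov (imp (imp A B) (imp A C)) :=
  h.mp _ _ (h.ax2 A B C) (h.mp _ _ (h.ax1 (imp B C) A) hBC)

theorem imp_neg_neg (h : HilbertImp Prov) (A : Fm) : Prov (imp A (neg (neg A))) :=
  h.imp_trans (h.ax1 A (neg A)) (h.mp _ _ (h.ax2 (neg A) A bot) (h.imp_self (neg A)))

theorem imp_neg_comm (h : HilbertImp Prov) (hAB : Prov (imp A (neg B))) :
    Prov (imp B (neg A)) :=
  h.imp_trans (h.imp_neg_neg B) (h.imp_imp_imp_left bot hAB)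

theorem neg_of_imp_of_imp_neg (h : HilbertImp Prov) (hAB : Prov (imp A B))
    (hAnB : Prov (imp A (neg B))) : Prov (neg A) :=
  h.mp _ _ (h.mp _ _ (h.ax2 A B bot) hAnB) hAB

end HilbertImp

namespace HilbertClassical

theorem neg_neg_imp (h : HilbertClassical Prov) (A : Fm) : Prov (imp (neg (neg A)) A) :=
  h.mp _ _ (h.ax3 A (neg (neg A))) (h.imp_neg_neg (neg A))

theorem conj_left (h : HilbertClassical Prov) (hAB : Prov (conj A B)) : Prov A :=
  have hnA : Prov (imp (neg A) (imp A (neg B))) := h.imp_imp_imp_right A (h.ax1 bot B)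
  h.mp _ _ (h.imp_trans (h.imp_imp_imp_left bot hnA) (h.neg_neg_imp A)) hAB

theorem conj_right (h : HilbertClassical Prov) (hAB : Prov (conj A B)) : Prov B :=
  h.mp _ _ (h.imp_trans (h.imp_imp_imp_left bot (h.ax1 (neg B) A)) (h.neg_neg_imp B)) hAB

end HilbertClassical

namespace NormalModal

theorem box_mono (h : NormalModal Prov) (hAB : Prov (imp A B)) : Prov (imp (box A) (box B)) :=
  h.mp _ _ (h.axK A B) (h.nec _ hAB)

theorem neg_box_of_imp_neg_box (h : NormalModal Prov)
    (hD : Prov (imp (box A) (neg (box (neg A))))) (h4 : Prov (imp (box A) (box (box A))))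
    (hA : Prov (imp A (neg (box A)))) : Prov (neg (box A)) :=
  have hbox_neg : Prov (imp (box A) (box (neg A))) :=
    h.imp_trans h4 (h.box_mono (h.imp_neg_comm hA))
  h.neg_of_imp_of_imp_neg hbox_neg hD

end NormalModal

/-- The Believer Paradox in modal logic: any normal modal logic containing the
axiom schemes D: `□A → ¬□¬A` and 4: `□A → □□A`, extended by the fixed point axiom `δ ↔ ¬□δ`,
is inconsistent. -/
theorem modal_fixed_point_D4_inconsistent
    (Prov : Fm → Prop)
    (ax1 : ∀ A B, Prov (imp A (imp B A)))
    (ax2 : ∀ A B C, Prov (imp (imp A (imp B C)) (imp (imp A B) (imp A C))))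
    (ax3 : ∀ A B, Prov (imp (imp (neg A) (neg B)) (imp B A)))
    (axK : ∀ A B, Prov (imp (box (imp A B)) (imp (box A) (box B))))
    (mp : ∀ A B, Prov (imp A B) → Prov A → Prov B)
    (nec : ∀ A, Prov A → Prov (box A))
    (axD : ∀ A, Prov (imp (box A) (neg (box (neg A)))))
    (ax4 : ∀ A, Prov (imp (box A) (box (box A))))
    (fp : Prov (iff' delta (neg (box delta)))) :
    Prov bot := by
  have h : NormalModal Prov := { ax1, ax2, mp, ax3, axK, nec }
  have h_not_box : Prov (neg (box delta)) :=
    h.neg_box_of_imp_neg_box (axD delta) (ax4 delta) (h.conj_left fp)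
  have h_delta : Prov delta := mp _ _ (h.conj_right fp) h_not_box
  exact mp _ _ h_not_box (nec _ h_delta)
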